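/- Let R be a noncommutative finite (not necessarily unital) ring. Then |Cent(R)| = 4 if and only if d(R) = 5/8. -/

import Mathlib

/-- The centralizer of `r` in a (not necessarily unital) ring: `{s | r*s = s*r}`. -/
def rCentralizer {R : Type*} [NonUnitalRing R] (r : R) : Set R := {s | r * s = s * r}

/-- The set of all centralizers of elements of `R`. -/
def Cent (R : Type*) [NonUnitalRing R] : Set (Set R) :=
  Set.range (fun r : R => rCentralizer r)

/-- The center of a (not necessarily unital) ring, as a set. -/
def rCenter (R : Type*) [NonUnitalRing R] : Set R := {s | ∀ r : R, r * s = s * r}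

/-- The commutativity degree of a finite ring: `d(R) = (1/|R|²) ∑_{r ∈ R} |C(r)|`. -/
noncomputable def commDeg (R : Type*) [NonUnitalRing R] [Fintype R] : ℚ :=
  (∑ r : R, ((rCentralizer r).ncard : ℚ)) / ((Fintype.card R : ℚ)) ^ 2


/-!
Both conditions are equivalent to `[R : Z] = 4`, where `Z` is the centre. For noncentral `r`
the additive subgroups satisfy `Z < C(r) < R`, so `[R : Z] ≥ 4` and `[R : C(r)] ≥ 2`, and both
bounds are attained together once `[R : Z] = 4`. Summing, `2 ∑ |C(r)| ≤ |R| (|R| + |Z|)` with equality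
when `[R : Z] = 4`; so `d(R) = 5/8` forces `|R| ≤ 4 |Z|`, and `|R| = 4 |Z|` gives `d(R) = 5/8`.
Since `C(r)` depends only on `r + Z`, `|Cent R| ≤ [R : Z]`, while a noncommuting pair `a, b`
already gives four centralizers `R, C(a), C(b), C(a + b)`. Conversely, if
`Cent R = {R, A, B, K}`, the proper subgroups `A, B, K` cover `R` and meet in `Z`; a group
covered by three proper subgroups has each of index 2 and `A ∩ B ≤ K` (Scorza), so
`[R : Z] ≤ [R : A] [R : B] = 4`.
-/

namespace AddSubgroup

variable {G : Type*} [AddGroup G] {A B K : AddSubgroup G}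

theorem exists_mem_notMem_notMem_of_cover (hB : B ≠ ⊤) (hK : K ≠ ⊤)
    (hcov : ∀ g, g ∈ A ∨ g ∈ B ∨ g ∈ K) : ∃ p ∈ A, p ∉ B ∧ p ∉ K := by
  obtain ⟨b, hb⟩ : ∃ b, b ∉ B := by simpa [eq_top_iff'] using hB
  obtain ⟨k, hk⟩ : ∃ k, k ∉ K := by simpa [eq_top_iff'] using hK
  by_cases hbK : b ∈ K
  · by_cases hkB : k ∈ B
    · refine ⟨b + k, ?_, by rwa [B.add_mem_cancel_right hkB],
        by rwa [K.add_mem_cancel_left hbK]⟩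
      have := hcov (b + k)
      rw [B.add_mem_cancel_right hkB, K.add_mem_cancel_left hbK] at this
      tauto
    · exact ⟨k, by have := hcov k; tauto, hkB, hk⟩
  · exact ⟨b, by have := hcov b; tauto, hb, hbK⟩

theorem inf_le_of_cover (hA : A ≠ ⊤) (hB : B ≠ ⊤) (hK : K ≠ ⊤)
    (hcov : ∀ g, g ∈ A ∨ g ∈ B ∨ g ∈ K) : A ⊓ B ≤ K := by
  obtain ⟨p, hpA, hpB, hpK⟩ := exists_mem_notMem_notMem_of_cover hB hK hcov
  obtain ⟨q, hqB, hqA, hqK⟩ :=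
    exists_mem_notMem_notMem_of_cover hA hK fun g => or_left_comm.mp (hcov g)
  have hpq : p + q ∈ K := by
    have := hcov (p + q)
    rw [A.add_mem_cancel_left hpA, B.add_mem_cancel_right hqB] at this
    tauto
  rintro w ⟨hwA, hwB⟩
  have := hcov (w + (p + q))
  rw [A.add_mem_cancel_left hwA, B.add_mem_cancel_left hwB, A.add_mem_cancel_left hpA,
    B.add_mem_cancel_right hqB, K.add_mem_cancel_right hpq] at this
  tauto

theorem index_eq_two_of_cover (hA : A ≠ ⊤) (hB : B ≠ ⊤) (hK : K ≠ ⊤)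
    (hcov : ∀ g, g ∈ A ∨ g ∈ B ∨ g ∈ K) : A.index = 2 := by
  have hcov' : ∀ g, g ∈ B ∨ g ∈ K ∨ g ∈ A := fun g => (hcov g).rotate
  have hBK : B ⊓ K ≤ A := inf_le_of_cover hB hK hA hcov'
  obtain ⟨q, hqB, hqK, hqA⟩ := exists_mem_notMem_notMem_of_cover hK hA hcov'
  obtain ⟨t, htK, htA, htB⟩ := exists_mem_notMem_notMem_of_cover hA hB fun g => (hcov' g).rotate
  have add_q_mem_of_mem_K : ∀ g ∈ K, g ∉ A → g + q ∈ A := fun g hgK hgA => by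
    have hgB : g ∉ B := fun hgB => hgA (hBK ⟨hgB, hgK⟩)
    have := hcov (g + q)
    rw [B.add_mem_cancel_right hqB, K.add_mem_cancel_left hgK] at this
    tauto
  have add_neg_t_mem_of_mem_B : ∀ g ∈ B, g ∉ A → g + -t ∈ A := fun g hgB hgA => by
    have hgK : g ∉ K := fun hgK => hgA (hBK ⟨hgB, hgK⟩)
    have := hcov (g + -t)
    rw [B.add_mem_cancel_left hgB, K.add_mem_cancel_right (K.neg_mem htK), B.neg_mem_iff] at this
    tauto
  -- translation by `q`, which lies in `B` alone, swaps `A` and its complement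
  refine index_eq_two_iff.mpr ⟨q, fun g => ?_⟩
  by_cases hgA : g ∈ A
  · simp [hgA, A.add_mem_cancel_left hgA, hqA]
  · suffices g + q ∈ A by simp [hgA, this]
    rcases hcov g with hg | hg | hg
    · exact absurd hg hgA
    · simpa [add_assoc] using
        A.add_mem (add_neg_t_mem_of_mem_B g hg hgA) (add_q_mem_of_mem_K t htK htA)
    · exact add_q_mem_of_mem_K g hg hgA

theorem index_inf_inf_le_four_of_cover (hA : A ≠ ⊤) (hB : B ≠ ⊤) (hK : K ≠ ⊤)
    (hcov : ∀ g, g ∈ A ∨ g ∈ B ∨ g ∈ K) : (A ⊓ B ⊓ K).index ≤ 4 := by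
  rw [inf_eq_left.mpr (inf_le_of_cover hA hB hK hcov)]
  calc (A ⊓ B).index ≤ A.index * B.index := index_inf_le
    _ = 2 * 2 := by
      rw [index_eq_two_of_cover hA hB hK hcov,
        index_eq_two_of_cover hB hK hA fun g => (hcov g).rotate]

end AddSubgroup

section Centralizers

variable {R : Type*} [NonUnitalRing R]

def centralizerAddSubgroup (r : R) : AddSubgroup R :=
  (NonUnitalSubring.centralizer {r}).toAddSubgroup

variable (R) in
def centerAddSubgroup : AddSubgroup R := (NonUnitalSubring.center R).toAddSubgroup

theorem mem_centralizerAddSubgroup {r s : R} :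
    s ∈ centralizerAddSubgroup r ↔ s ∈ rCentralizer r := by
  simp [centralizerAddSubgroup, NonUnitalSubring.mem_centralizer_iff, rCentralizer]

theorem mem_centerAddSubgroup {s : R} : s ∈ centerAddSubgroup R ↔ s ∈ rCenter R :=
  NonUnitalSubring.mem_center_iff

theorem self_mem_rCentralizer (r : R) : r ∈ rCentralizer r := rfl

theorem coe_centralizerAddSubgroup (r : R) :
    (centralizerAddSubgroup r : Set R) = rCentralizer r :=
  Set.ext fun _ => mem_centralizerAddSubgroup

theorem rCentralizer_eq_univ_iff {r : R} : rCentralizer r = Set.univ ↔ r ∈ rCenter R :=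
  ⟨fun h s => (h ▸ Set.mem_univ s : s ∈ rCentralizer r).symm,
    fun h => Set.eq_univ_of_forall fun s => (h s).symm⟩

theorem rCentralizer_add_of_mem_rCenter {r z : R} (hz : z ∈ rCenter R) :
    rCentralizer (r + z) = rCentralizer r := by
  ext s
  change (r + z) * s = s * (r + z) ↔ r * s = s * r
  rw [add_mul, mul_add, hz s, add_left_inj]

theorem centralizerAddSubgroup_eq_top_iff {r : R} :
    centralizerAddSubgroup r = ⊤ ↔ r ∈ rCenter R := by
  rw [← rCentralizer_eq_univ_iff, AddSubgroup.eq_top_iff', Set.eq_univ_iff_forall]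
  simp only [mem_centralizerAddSubgroup]

theorem centerAddSubgroup_le_centralizerAddSubgroup (r : R) :
    centerAddSubgroup R ≤ centralizerAddSubgroup r := fun _ hs =>
  mem_centralizerAddSubgroup.mpr (mem_centerAddSubgroup.mp hs r)

theorem relIndex_mul_index_centralizerAddSubgroup (r : R) :
    (centerAddSubgroup R).relIndex (centralizerAddSubgroup r) *
      (centralizerAddSubgroup r).index = (centerAddSubgroup R).index :=
  AddSubgroup.relIndex_mul_index (centerAddSubgroup_le_centralizerAddSubgroup r)

theorem univ_mem_Cent : Set.univ ∈ Cent R :=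
  ⟨0, rCentralizer_eq_univ_iff.mpr fun r => by rw [mul_zero, zero_mul]⟩

theorem ncard_rCentralizer_mul_index (r : R) :
    (rCentralizer r).ncard * (centralizerAddSubgroup r).index = Nat.card R := by
  rw [← coe_centralizerAddSubgroup, ← Nat.card_coe_set_eq]
  exact AddSubgroup.card_mul_index _

theorem exists_Cent_eq_of_ncard_eq_four (hC : (Cent R).ncard = 4) :
    ∃ a b k : R, a ∉ rCenter R ∧ b ∉ rCenter R ∧ k ∉ rCenter R ∧
      Cent R = {Set.univ, rCentralizer a, rCentralizer b, rCentralizer k} := by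
  have huniv : Set.univ ∈ Cent R := univ_mem_Cent
  obtain ⟨A, B, K, -, -, -, hABK⟩ := Set.ncard_eq_three.mp
    (by rw [Set.ncard_sdiff_singleton_of_mem huniv, hC] : (Cent R \ {Set.univ}).ncard = 3)
  have hrep : ∀ S ∈ Cent R \ {Set.univ}, ∃ a ∉ rCenter R, rCentralizer a = S := by
    rintro _ ⟨⟨a, rfl⟩, ha⟩
    exact ⟨a, mt rCentralizer_eq_univ_iff.mpr ha, rfl⟩
  obtain ⟨a, ha, rfl⟩ := hrep A (by simp [hABK])
  obtain ⟨b, hb, rfl⟩ := hrep B (by simp [hABK])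
  obtain ⟨k, hk, rfl⟩ := hrep K (by simp [hABK])
  refine ⟨a, b, k, ha, hb, hk, ?_⟩
  rw [← hABK, Set.insert_sdiff_singleton, Set.insert_eq_of_mem huniv]

variable [Finite R]

theorem four_le_ncard_Cent (h : ∃ x y : R, x * y ≠ y * x) : 4 ≤ (Cent R).ncard := by
  obtain ⟨a, b, hab⟩ := h
  have hba : b ∉ rCentralizer a := hab
  have hab' : a ∉ rCentralizer b := fun h => hab h.symm
  have ha_add : a ∉ rCentralizer (a + b) := fun h => hab (by
    change (a + b) * a = a * (a + b) at h
    rw [add_mul, mul_add] at h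
    exact (add_left_cancel h).symm)
  have hb_add : b ∉ rCentralizer (a + b) := fun h => hab (by
    change (a + b) * b = b * (a + b) at h
    rw [add_mul, mul_add] at h
    exact add_right_cancel h)
  have hsub : {Set.univ, rCentralizer a, rCentralizer b, rCentralizer (a + b)} ⊆ Cent R := by
    rintro S (rfl | rfl | rfl | rfl)
    exacts [univ_mem_Cent, ⟨a, rfl⟩, ⟨b, rfl⟩, ⟨a + b, rfl⟩]
  refine le_of_eq_of_le ?_ (Set.ncard_le_ncard hsub)
  rw [Set.ncard_insert_of_notMem, Set.ncard_insert_of_notMem, Set.ncard_pair]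
  · exact ne_of_mem_of_not_mem' (self_mem_rCentralizer b) hb_add
  · simp only [Set.mem_insert_iff, Set.mem_singleton_iff, not_or]
    exact ⟨ne_of_mem_of_not_mem' (self_mem_rCentralizer a) hab',
      ne_of_mem_of_not_mem' (self_mem_rCentralizer a) ha_add⟩
  · simp only [Set.mem_insert_iff, Set.mem_singleton_iff, not_or]
    exact ⟨ne_of_mem_of_not_mem' (Set.mem_univ b) hba,
      ne_of_mem_of_not_mem' (Set.mem_univ a) hab', ne_of_mem_of_not_mem' (Set.mem_univ a) ha_add⟩

theorem ncard_Cent_le_index_centerAddSubgroup :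
    (Cent R).ncard ≤ (centerAddSubgroup R).index := by
  let f : R ⧸ centerAddSubgroup R → Set R := Quotient.lift rCentralizer fun r s hrs => by
    rw [← add_neg_cancel_left r s, rCentralizer_add_of_mem_rCenter
      (mem_centerAddSubgroup.mp (QuotientAddGroup.leftRel_apply.mp hrs))]
  have hf : Cent R = Set.range f := QuotientAddGroup.mk_surjective.range_comp f
  rw [hf, ← Nat.card_coe_set_eq]
  exact Finite.card_range_le f

theorem two_le_index_centralizerAddSubgroup {r : R} (hr : r ∉ rCenter R) :
    2 ≤ (centralizerAddSubgroup r).index :=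
  AddSubgroup.one_lt_index_of_ne_top (mt centralizerAddSubgroup_eq_top_iff.mp hr)

theorem two_le_relIndex_centerAddSubgroup {r : R} (hr : r ∉ rCenter R) :
    2 ≤ (centerAddSubgroup R).relIndex (centralizerAddSubgroup r) := by
  have h1 : (centerAddSubgroup R).relIndex (centralizerAddSubgroup r) ≠ 1 := fun h =>
    hr (mem_centerAddSubgroup.mp (AddSubgroup.relIndex_eq_one.mp h
      (mem_centralizerAddSubgroup.mpr (self_mem_rCentralizer r))))
  have h0 : (centerAddSubgroup R).relIndex (centralizerAddSubgroup r) ≠ 0 :=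
    AddSubgroup.index_ne_zero_of_finite
  omega

theorem four_le_index_centerAddSubgroup (h : ∃ x y : R, x * y ≠ y * x) :
    4 ≤ (centerAddSubgroup R).index := by
  obtain ⟨x, y, hxy⟩ := h
  have hx : x ∉ rCenter R := fun hx => hxy (hx y).symm
  rw [← relIndex_mul_index_centralizerAddSubgroup x]
  nlinarith [two_le_relIndex_centerAddSubgroup hx, two_le_index_centralizerAddSubgroup hx]

theorem index_centralizerAddSubgroup_eq_two (hZ : (centerAddSubgroup R).index = 4) {r : R}
    (hr : r ∉ rCenter R) : (centralizerAddSubgroup r).index = 2 := by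
  have := relIndex_mul_index_centralizerAddSubgroup r
  have := two_le_relIndex_centerAddSubgroup hr
  have := two_le_index_centralizerAddSubgroup hr
  nlinarith

theorem index_centerAddSubgroup_le_four_of_Cent_eq {a b k : R} (ha : a ∉ rCenter R)
    (hb : b ∉ rCenter R) (hk : k ∉ rCenter R)
    (hC : Cent R = {Set.univ, rCentralizer a, rCentralizer b, rCentralizer k}) :
    (centerAddSubgroup R).index ≤ 4 := by
  have hCent (r : R) : rCentralizer r ∈ ({Set.univ, rCentralizer a, rCentralizer b,
      rCentralizer k} : Set (Set R)) := hC ▸ ⟨r, rfl⟩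
  have hcov (r : R) : r ∈ centralizerAddSubgroup a ∨ r ∈ centralizerAddSubgroup b ∨
      r ∈ centralizerAddSubgroup k := by
    simp only [mem_centralizerAddSubgroup]
    rcases hCent r with h | h | h | h
    · exact Or.inl (rCentralizer_eq_univ_iff.mp h a)
    · exact Or.inl (h ▸ self_mem_rCentralizer r)
    · exact Or.inr (Or.inl (h ▸ self_mem_rCentralizer r))
    · exact Or.inr (Or.inr (Set.mem_singleton_iff.mp h ▸ self_mem_rCentralizer r))
  have hinf : centralizerAddSubgroup a ⊓ centralizerAddSubgroup b ⊓ centralizerAddSubgroup k ≤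
      centerAddSubgroup R := by
    intro x hx
    simp only [AddSubgroup.mem_inf, mem_centralizerAddSubgroup] at hx
    obtain ⟨⟨hxa, hxb⟩, hxk⟩ := hx
    refine mem_centerAddSubgroup.mpr fun r => ?_
    change x ∈ rCentralizer r
    rcases hCent r with h | h | h | h
    · exact h ▸ Set.mem_univ x
    · exact h ▸ hxa
    · exact h ▸ hxb
    · exact Set.mem_singleton_iff.mp h ▸ hxk
  calc (centerAddSubgroup R).index
      ≤ (centralizerAddSubgroup a ⊓ centralizerAddSubgroup b ⊓ centralizerAddSubgroup k).index :=
        AddSubgroup.index_antitone hinf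
    _ ≤ 4 := AddSubgroup.index_inf_inf_le_four_of_cover
        (mt centralizerAddSubgroup_eq_top_iff.mp ha) (mt centralizerAddSubgroup_eq_top_iff.mp hb)
        (mt centralizerAddSubgroup_eq_top_iff.mp hk) hcov

theorem index_centerAddSubgroup_eq_four_iff_ncard_Cent (h : ∃ x y : R, x * y ≠ y * x) :
    (centerAddSubgroup R).index = 4 ↔ (Cent R).ncard = 4 := by
  refine ⟨fun hZ => ?_, fun hC => ?_⟩
  · exact le_antisymm (hZ ▸ ncard_Cent_le_index_centerAddSubgroup) (four_le_ncard_Cent h)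
  refine le_antisymm ?_ (four_le_index_centerAddSubgroup h)
  obtain ⟨a, b, k, ha, hb, hk, hCent⟩ := exists_Cent_eq_of_ncard_eq_four hC
  exact index_centerAddSubgroup_le_four_of_Cent_eq ha hb hk hCent

end Centralizers

section CommDeg

variable {R : Type*} [NonUnitalRing R] [Fintype R]

open Classical in
theorem sum_card_add_ite_mem_rCenter :
    ∑ r : R, (Nat.card R + if r ∈ rCenter R then Nat.card R else 0) =
      Nat.card R * (Nat.card R + Nat.card (centerAddSubgroup R)) := by
  have hZ : (Finset.univ.filter (· ∈ rCenter R)).card = Nat.card (centerAddSubgroup R) := by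
    rw [← Fintype.card_subtype, ← Nat.card_eq_fintype_card]
    exact Nat.card_congr (Equiv.subtypeEquivRight fun _ => mem_centerAddSubgroup.symm)
  rw [Finset.sum_add_distrib, ← Finset.sum_filter, Finset.sum_const, Finset.sum_const, hZ,
    Finset.card_univ, ← Nat.card_eq_fintype_card, smul_eq_mul, smul_eq_mul]
  ring

theorem two_mul_sum_ncard_rCentralizer_le :
    2 * ∑ r : R, (rCentralizer r).ncard ≤
      Nat.card R * (Nat.card R + Nat.card (centerAddSubgroup R)) := by
  classical
  rw [← sum_card_add_ite_mem_rCenter, Finset.mul_sum]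
  refine Finset.sum_le_sum fun r _ => ?_
  split_ifs with hr
  · rw [rCentralizer_eq_univ_iff.mpr hr, Set.ncard_univ]
    omega
  · have := ncard_rCentralizer_mul_index r
    have := two_le_index_centralizerAddSubgroup hr
    nlinarith

theorem two_mul_sum_ncard_rCentralizer_eq (hZ : (centerAddSubgroup R).index = 4) :
    2 * ∑ r : R, (rCentralizer r).ncard =
      Nat.card R * (Nat.card R + Nat.card (centerAddSubgroup R)) := by
  classical
  rw [← sum_card_add_ite_mem_rCenter, Finset.mul_sum]
  refine Finset.sum_congr rfl fun r _ => ?_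
  split_ifs with hr
  · rw [rCentralizer_eq_univ_iff.mpr hr, Set.ncard_univ]
    ring
  · rw [← ncard_rCentralizer_mul_index r, index_centralizerAddSubgroup_eq_two hZ hr]
    ring

theorem commDeg_eq_five_eighths_iff :
    commDeg R = 5 / 8 ↔ 8 * ∑ r : R, (rCentralizer r).ncard = 5 * Nat.card R ^ 2 := by
  have hn : (0 : ℚ) < Nat.card R := by exact_mod_cast Nat.card_pos
  rw [commDeg, ← Nat.card_eq_fintype_card, div_eq_iff (by positivity), ← Nat.cast_inj (R := ℚ)]
  push_cast
  constructor <;> intro h <;> linarith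

theorem index_centerAddSubgroup_eq_four_iff_commDeg (h : ∃ x y : R, x * y ≠ y * x) :
    (centerAddSubgroup R).index = 4 ↔ commDeg R = 5 / 8 := by
  rw [commDeg_eq_five_eighths_iff]
  have hcard := (centerAddSubgroup R).card_mul_index
  constructor
  · intro hZ
    have := two_mul_sum_ncard_rCentralizer_eq hZ
    rw [hZ] at hcard
    nlinarith
  · intro hS
    have := two_mul_sum_ncard_rCentralizer_le (R := R)
    have hn : 0 < Nat.card R := Nat.card_pos
    have hz : 0 < Nat.card (centerAddSubgroup R) := Nat.card_pos
    refine le_antisymm ?_ (four_le_index_centerAddSubgroup h)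
    have : Nat.card R ≤ 4 * Nat.card (centerAddSubgroup R) := by nlinarith
    nlinarith

end CommDeg

/-- A noncommutative finite ring has `|Cent(R)| = 4` iff `d(R) = 5/8`. -/
theorem four_centralizer_iff_commDeg (R : Type*) [NonUnitalRing R] [Fintype R]
    (h : ∃ x y : R, x * y ≠ y * x) :
    (Cent R).ncard = 4 ↔ commDeg R = 5 / 8 := by
  rw [← index_centerAddSubgroup_eq_four_iff_ncard_Cent h,
    index_centerAddSubgroup_eq_four_iff_commDeg h]
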